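/- An Artin group whose Coxeter matrix has an entry m_{s,t} with 2 < m_{s,t} < ∞ for some s ≠ t is not biorderable. -/

import Mathlib

/-!
By the braid relation, `x = s` and `y = t` satisfy `(x y) ^ m = (y x) ^ m` in the Artin group,
where `m = m_{s,t}`. A bi-invariant order makes `a ↦ a ^ m` strictly monotone, so it would force
`x y = y x`. That fails already in the Coxeter group: in its geometric representation on `ℝ^(B)`
the generator `u` acts as the reflection `v ↦ v - 2 ⟨e_u, v⟩ e_u` for the Tits form
`⟨e_u, e_v⟩ = -cos (π / m_{u,v})`, and the reflections of `s` and `t` commute only when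
`cos (π / m) = 0`. The Coxeter relations for these reflections come from the Chebyshev formula for
`(r₁ r₂) ^ m`, whose coefficients vanish at `t = 2 cos (2π / m)`.
-/

def altFree {B : Type*} (s t : B) (m : ℕ) : FreeGroup B :=
  (List.map FreeGroup.of (CoxeterSystem.alternatingWord s t m)).prod

def artinRels {B : Type*} (M : CoxeterMatrix B) : Set (FreeGroup B) :=
  {r | ∃ s t : B, s ≠ t ∧ M s t ≠ 0 ∧
    r = altFree s t (M s t) * (altFree t s (M s t))⁻¹}

abbrev ArtinGroup {B : Type*} (M : CoxeterMatrix B) : Type _ :=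
  PresentedGroup (artinRels M)

open Real Module CoxeterSystem Polynomial.Chebyshev

theorem pow_left_injective_of_biInvariant {G : Type*} [Group G] (r : G → G → Prop)
    [IsLinearOrder G r] (hr : ∀ a b c d : G, r a b → r (c * a * d) (c * b * d)) {n : ℕ}
    (hn : n ≠ 0) : Function.Injective fun a : G => a ^ n := by
  let _ : LinearOrder G :=
    { le := r
      le_refl := refl_of r
      le_trans := fun _ _ _ => trans_of r
      le_antisymm := fun _ _ => antisymm_of r
      le_total := total_of r
      toDecidableLE := Classical.decRel r }
  have _ : MulLeftMono G := ⟨fun c a b h => by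
    have := hr a b c 1 h
    rwa [mul_one, mul_one] at this⟩
  have _ : MulRightMono G := ⟨fun d a b h => by
    have := hr a b 1 d h
    rwa [one_mul, one_mul] at this⟩
  exact (pow_left_strictMono hn).injective

theorem Polynomial.Chebyshev.S_real_eval_two_mul_cos {θ : ℝ} (hθ : sin θ ≠ 0) (n : ℤ) :
    (S ℝ n).eval (2 * cos θ) = sin ((n + 1) * θ) / sin θ := by
  rw [eq_div_iff hθ, S_two_mul_real_cos]

namespace Module

variable {V : Type*} [AddCommGroup V] [Module ℝ V] {x y : V} {f g : Dual ℝ V}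

theorem reflection_mul_reflection_sq_eq_one (hf : f x = 2) (hg : g y = 2) (hfy : f y = 0)
    (hgx : g x = 0) : (reflection hf * reflection hg) ^ 2 = 1 := by
  ext z
  simp only [pow_two, LinearEquiv.mul_apply, reflection_apply, map_sub, map_smul, hf, hg, hfy, hgx,
    LinearEquiv.coe_one, id_eq]
  module

theorem reflection_mul_reflection_pow_eq_one (hf : f x = 2) (hg : g y = 2) {m : ℕ} (hm : 3 ≤ m)
    (hfg : f y * g x = 4 * cos (π / m) ^ 2) : (reflection hf * reflection hg) ^ m = 1 := by
  have hm0 : (0 : ℝ) < m := by positivity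
  have hm3 : (3 : ℝ) ≤ m := by exact_mod_cast hm
  have ht : 2 * cos (2 * (π / m)) = f y * g x - 2 := by rw [hfg, cos_two_mul]; ring
  have hsin : sin (2 * (π / m)) ≠ 0 := by
    refine (sin_pos_of_pos_of_lt_pi (by positivity) ?_).ne'
    rw [mul_div_assoc', div_lt_iff₀ hm0]
    nlinarith [pi_pos]
  apply LinearEquiv.toLinearMap_injective
  rw [reflection_mul_reflection_pow hf hg m _ ht]
  simp only [S_real_eval_two_mul_cos hsin]
  obtain ⟨j, rfl | rfl⟩ := Nat.even_or_odd' m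
  · -- both coefficients contain the factor `S_{j-1}(t) = sin (j · 2π / 2j) / sin (2π / 2j) = 0`
    have hj0 : (j : ℝ) ≠ 0 := Nat.cast_ne_zero.mpr (by omega)
    have h1 : ((↑(2 * j) : ℤ) - 2) / 2 = j - 1 := by omega
    have h2 : ((↑(2 * j) : ℤ) - 1) / 2 = j - 1 := by omega
    have hj : (((j : ℤ) - 1 : ℤ) + 1 : ℝ) * (2 * (π / ↑(2 * j))) = π := by
      push_cast; field_simp; ring
    rw [h1, h2, hj]
    simp
  · -- both coefficients contain the factor `S_j(t) + S_{j-1}(t) = 0`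
    have h1 : ((↑(2 * j + 1) : ℤ) - 2) / 2 = j - 1 := by omega
    have h2 : ((↑(2 * j + 1) : ℤ) - 1) / 2 = j := by omega
    have h3 : ((↑(2 * j + 1) : ℤ) - 3) / 2 = j - 1 := by omega
    have h4 : ((↑(2 * j + 1) : ℤ)) / 2 = j := by omega
    have hsum : sin (((j : ℤ) + 1 : ℝ) * (2 * (π / ↑(2 * j + 1))))
        + sin ((((j : ℤ) - 1 : ℤ) + 1 : ℝ) * (2 * (π / ↑(2 * j + 1)))) = 0 := by
      have e1 : ((j : ℤ) + 1 : ℝ) * (2 * (π / ↑(2 * j + 1))) = π / ↑(2 * j + 1) + π := by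
        push_cast; field_simp; ring
      have e2 :
          (((j : ℤ) - 1 : ℤ) + 1 : ℝ) * (2 * (π / ↑(2 * j + 1))) = π - π / ↑(2 * j + 1) := by
        push_cast; field_simp; ring
      rw [e1, e2, sin_add_pi, sin_pi_sub, neg_add_cancel]
    rw [h1, h2, h3, h4, ← add_div, hsum]
    simp

theorem two_mul_smul_eq_of_commute_reflection (hf : f x = 2) (hg : g y = 2)
    (h : Commute (reflection hf) (reflection hg)) : (2 * f y) • x = (f y * g x) • y := by
  have := congr($h.eq y)
  simp only [LinearEquiv.mul_apply, reflection_apply, map_sub, map_smul, hg] at this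
  rw [← sub_eq_zero] at this ⊢
  rw [← this]
  module

end Module

namespace CoxeterMatrix

variable {B : Type*} (M : CoxeterMatrix B)

/-- Twice the Tits form `⟨e_u, -⟩`. An entry `M u v = 0` (that is, `m_{u,v} = ∞`) gets the
correct value `-2 = -2 cos 0`, because `π / 0 = 0`. -/
noncomputable def corootForm (u : B) : Dual ℝ (B →₀ ℝ) :=
  Finsupp.linearCombination ℝ fun v => -2 * cos (π / M u v)

theorem corootForm_single (u v : B) :
    M.corootForm u (Finsupp.single v 1) = -2 * cos (π / M u v) := by
  simp [corootForm]

theorem corootForm_single_self (u : B) : M.corootForm u (Finsupp.single u 1) = 2 := by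
  simp [corootForm_single]

noncomputable def geometricReflection (u : B) : (B →₀ ℝ) ≃ₗ[ℝ] (B →₀ ℝ) :=
  reflection (M.corootForm_single_self u)

theorem isLiftable_geometricReflection : M.IsLiftable M.geometricReflection := by
  intro u v
  obtain rfl | huv := eq_or_ne u v
  · rw [M.diagonal, pow_one]
    exact mul_eq_one_iff_eq_inv.mpr (reflection_inv _).symm
  have hvu : M.corootForm v (Finsupp.single u 1) = -2 * cos (π / M u v) := by
    rw [corootForm_single, M.symmetric]
  have h1 := M.off_diagonal u v huv
  obtain h0 | h2 | h3 : M u v = 0 ∨ M u v = 2 ∨ 3 ≤ M u v := by omega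
  · rw [h0, pow_zero]
  · have hc : cos (π / M u v) = 0 := by rw [h2, Nat.cast_ofNat, cos_pi_div_two]
    rw [h2]
    exact reflection_mul_reflection_sq_eq_one _ _ (by rw [corootForm_single, hc, mul_zero])
      (by rw [hvu, hc, mul_zero])
  · exact reflection_mul_reflection_pow_eq_one _ _ h3 (by rw [corootForm_single, hvu]; ring)

theorem geometricReflection_mul_ne {s t : B} (hst : s ≠ t) (hm : 2 < M s t) :
    M.geometricReflection s * M.geometricReflection t ≠
      M.geometricReflection t * M.geometricReflection s := by
  intro h
  have hm' : (2 : ℝ) < M s t := by exact_mod_cast hm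
  have hcos : 0 < cos (π / M s t) :=
    cos_pos_of_mem_Ioo ⟨by linarith [div_pos pi_pos (by linarith : (0 : ℝ) < M s t), pi_pos],
      div_lt_div_of_pos_left pi_pos two_pos hm'⟩
  have := congr($(two_mul_smul_eq_of_commute_reflection _ _ h) s)
  rw [Finsupp.smul_apply, Finsupp.smul_apply, Finsupp.single_eq_same, Finsupp.single_eq_of_ne hst,
    smul_zero, smul_eq_mul, mul_one, corootForm_single] at this
  linarith

theorem simple_mul_simple_ne {s t : B} (hst : s ≠ t) (hm : 2 < M s t) :
    M.simple s * M.simple t ≠ M.simple t * M.simple s := by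
  intro h
  have := congr(M.toCoxeterSystem.lift ⟨_, M.isLiftable_geometricReflection⟩ $h)
  simp only [map_mul, ← M.toCoxeterSystem_simple, CoxeterSystem.lift_apply_simple] at this
  exact M.geometricReflection_mul_ne hst hm this

end CoxeterMatrix

theorem map_altFree {B G : Type*} [Group G] (φ : FreeGroup B →* G) (s t : B) (m : ℕ) :
    φ (altFree s t m) = ((alternatingWord s t m).map fun u => φ (.of u)).prod := by
  rw [altFree, map_list_prod, List.map_map]
  rfl

theorem CoxeterSystem.prod_map_alternatingWord_eq_mul_pow {B G : Type*} [Monoid G] (g : B → G)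
    (s t : B) (m : ℕ) :
    ((alternatingWord s t m).map g).prod = (if Even m then 1 else g t) * (g s * g t) ^ (m / 2) := by
  induction m with
  | zero => simp [alternatingWord]
  | succ m ih =>
    rw [alternatingWord_succ', List.map_cons, List.prod_cons, ih]
    obtain ⟨k, rfl | rfl⟩ := Nat.even_or_odd' m
    · have h : (2 * k + 1) / 2 = 2 * k / 2 := by omega
      simp [h, parity_simps]
    · have h : (2 * k + 1 + 1) / 2 = (2 * k + 1) / 2 + 1 := by omega
      simp [h, parity_simps, pow_succ', ← mul_assoc]

theorem mul_pow_eq_of_braid {G : Type*} [Group G] {x y : G} {m : ℕ}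
    (h : (if Even m then 1 else y) * (x * y) ^ (m / 2) =
      (if Even m then 1 else x) * (y * x) ^ (m / 2)) :
    (x * y) ^ m = (y * x) ^ m := by
  obtain ⟨k, rfl | rfl⟩ := Nat.even_or_odd' m
  · simp only [show 2 * k / 2 = k by omega, even_two_mul, if_true, one_mul] at h
    rw [pow_mul', h, ← pow_mul']
  · simp only [show (2 * k + 1) / 2 = k by omega, Nat.not_even_two_mul_add_one, if_false] at h
    have split : ∀ a b : G, (a * b) ^ (2 * k + 1) = a * (b * a) ^ k * (b * (a * b) ^ k) := by
      intro a b
      rw [← mul_pow_mul, mul_assoc, ← mul_assoc a b, ← pow_succ', ← pow_add]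
      congr 1
      omega
    rw [split, split y, h]

namespace ArtinGroup

variable {B : Type*} (M : CoxeterMatrix B)

theorem of_mul_of_pow_eq (s t : B) :
    (PresentedGroup.of s * PresentedGroup.of t : ArtinGroup M) ^ M s t =
      (PresentedGroup.of t * PresentedGroup.of s) ^ M s t := by
  obtain rfl | hst := eq_or_ne s t
  · rfl
  obtain h0 | h0 := eq_or_ne (M s t) 0
  · rw [h0, pow_zero, pow_zero]
  apply mul_pow_eq_of_braid
  have :=
    PresentedGroup.mk_eq_mk_of_mul_inv_mem (show _ ∈ artinRels M from ⟨s, t, hst, h0, rfl⟩)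
  rwa [map_altFree, map_altFree, prod_map_alternatingWord_eq_mul_pow,
    prod_map_alternatingWord_eq_mul_pow] at this

def toCoxeterGroup : ArtinGroup M →* M.Group :=
  PresentedGroup.toGroup (f := M.simple) <| by
    rintro _ ⟨s, t, -, -, rfl⟩
    have := M.toCoxeterSystem.wordProd_braidWord_eq s t
    rw [map_mul, map_inv, mul_inv_eq_one, map_altFree, map_altFree]
    simpa only [FreeGroup.lift_apply_of, wordProd, braidWord, M.symmetric t s,
      M.toCoxeterSystem_simple] using this

theorem of_mul_of_ne {s t : B} (hst : s ≠ t) (hm : 2 < M s t) :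
    (PresentedGroup.of s * PresentedGroup.of t : ArtinGroup M) ≠
      PresentedGroup.of t * PresentedGroup.of s := by
  intro h
  have := congr(toCoxeterGroup M $h)
  simp only [map_mul, toCoxeterGroup, PresentedGroup.toGroup.of] at this
  exact M.simple_mul_simple_ne hst hm this

end ArtinGroup

theorem stmt2_general {B : Type*} (M : CoxeterMatrix B)
    (h : ∃ s t : B, s ≠ t ∧ 2 < M s t) :
    ¬ ∃ r : ArtinGroup M → ArtinGroup M → Prop, IsLinearOrder (ArtinGroup M) r ∧
      ∀ a b c d : ArtinGroup M, r a b → r (c * a * d) (c * b * d) := by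
  rintro ⟨r, _, hbi⟩
  obtain ⟨s, t, hst, hm⟩ := h
  exact ArtinGroup.of_mul_of_ne M hst hm <|
    pow_left_injective_of_biInvariant r hbi (by omega) (ArtinGroup.of_mul_of_pow_eq M s t)

/-- An Artin group having an entry `2 < m_{s,t} < ∞` admits no bi-invariant linear order. -/
theorem stmt2 {B : Type*} [Fintype B] (M : CoxeterMatrix B)
    (h : ∃ s t : B, s ≠ t ∧ 2 < M s t) :
    ¬ ∃ r : ArtinGroup M → ArtinGroup M → Prop, IsLinearOrder (ArtinGroup M) r ∧
      ∀ a b c d : ArtinGroup M, r a b → r (c * a * d) (c * b * d) :=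
  stmt2_general M h
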